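/- Let h : ℝ² → ℝ be C⁴, let A : ℝ² → ℝ² be an invertible linear map, and let x ∈ ℝ² be such that K₂(h) is nonzero in a neighborhood of A x. Define J₄(g)(y) as the directional derivative of the function J₃(g) = K₃(g)²/K₂(g)³ at the point y along the vector λ̂(g)(y) = (3·K₃(g)(y)/(2·K₂(g)(y)²)) · w_g(y). Then J₄(h ∘ A)(x) = J₄(h)(A x). -/

import Mathlib

/-- First partial derivative of `h : ℝ² → ℝ` in the `i`-th coordinate direction. -/
noncomputable def pd1 (h : (Fin 2 → ℝ) → ℝ) (i : Fin 2) (x : Fin 2 → ℝ) : ℝ :=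
  fderiv ℝ h x (Pi.single i 1)

/-- Second partial derivative of `h : ℝ² → ℝ`. -/
noncomputable def pd2 (h : (Fin 2 → ℝ) → ℝ) (i j : Fin 2) (x : Fin 2 → ℝ) : ℝ :=
  iteratedFDeriv ℝ 2 h x ![Pi.single i 1, Pi.single j 1]

/-- Third partial derivative of `h : ℝ² → ℝ`. -/
noncomputable def pd3 (h : (Fin 2 → ℝ) → ℝ) (i j m : Fin 2) (x : Fin 2 → ℝ) : ℝ :=
  iteratedFDeriv ℝ 3 h x ![Pi.single i 1, Pi.single j 1, Pi.single m 1]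

/-- The rotated gradient `w_h(x) = (h₂(x), −h₁(x))`. -/
noncomputable def wrot (h : (Fin 2 → ℝ) → ℝ) (x : Fin 2 → ℝ) : Fin 2 → ℝ :=
  ![pd1 h 1 x, -pd1 h 0 x]

/-- `K₂(h) = (1/2)(h₁₁h₂² − 2h₁₂h₁h₂ + h₂₂h₁²)`. -/
noncomputable def K2 (h : (Fin 2 → ℝ) → ℝ) (x : Fin 2 → ℝ) : ℝ :=
  (1 / 2) * (pd2 h 0 0 x * (pd1 h 1 x) ^ 2 - 2 * pd2 h 0 1 x * pd1 h 0 x * pd1 h 1 x +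
    pd2 h 1 1 x * (pd1 h 0 x) ^ 2)

/-- `K₃(h) = (1/6)(h₁₁₁h₂³ − 3h₁₁₂h₂²h₁ + 3h₁₂₂h₂h₁² − h₂₂₂h₁³)`. -/
noncomputable def K3 (h : (Fin 2 → ℝ) → ℝ) (x : Fin 2 → ℝ) : ℝ :=
  (1 / 6) * (pd3 h 0 0 0 x * (pd1 h 1 x) ^ 3 -
    3 * pd3 h 0 0 1 x * (pd1 h 1 x) ^ 2 * pd1 h 0 x +
    3 * pd3 h 0 1 1 x * pd1 h 1 x * (pd1 h 0 x) ^ 2 -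
    pd3 h 1 1 1 x * (pd1 h 0 x) ^ 3)

/-- The differential invariant `J₃(g) = K₃(g)²/K₂(g)³` of binary forms. -/
noncomputable def J3 (g : (Fin 2 → ℝ) → ℝ) (y : Fin 2 → ℝ) : ℝ :=
  (K3 g y) ^ 2 / (K2 g y) ^ 3

/-- The invariant vector field `λ̂(g)(y) = (3K₃(g)(y)/(2K₂(g)(y)²))·w_g(y)`. -/
noncomputable def lamhat (g : (Fin 2 → ℝ) → ℝ) (y : Fin 2 → ℝ) : Fin 2 → ℝ :=
  (3 * K3 g y / (2 * (K2 g y) ^ 2)) • wrot g y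

/-- `J₄(g)(y)` is the directional derivative of `J₃(g)` at `y` along `λ̂(g)(y)`. -/
noncomputable def J4 (g : (Fin 2 → ℝ) → ℝ) (y : Fin 2 → ℝ) : ℝ :=
  fderiv ℝ (J3 g) y (lamhat g y)

/-!
Up to the factors `1/2` and `1/6`, `K₂(h)(x)` and `K₃(h)(x)` are the second and third
differentials of `h` at `x` evaluated on the diagonal at the rotated gradient `w_h(x)`.
For `g = h ∘ A` one has `A (w_g x) = det A • w_h (A x)`, so `K₂` and `K₃` pick up the factors
`(det A)²` and `(det A)³`. Hence `J₃(g) = J₃(h) ∘ A` and `A (λ̂(g) x) = λ̂(h) (A x)`, and the chain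
rule gives `J₄(g)(x) = DJ₃(h)(A x) (A (λ̂(g) x)) = J₄(h)(A x)`.
-/

section Multilinear

variable {E F : Type*} [NormedAddCommGroup E] [NormedSpace ℝ E] [NormedAddCommGroup F]
  [NormedSpace ℝ F] {f : E → F}

theorem iteratedFDeriv_three_apply (x : E) (m : Fin 3 → E) :
    iteratedFDeriv ℝ 3 f x m = fderiv ℝ (fderiv ℝ (fderiv ℝ f)) x (m 0) (m 1) (m 2) := by
  rw [iteratedFDeriv_succ_apply_right, iteratedFDeriv_two_apply]; rfl

theorem fderiv_fderiv_fderiv_swap_left (hf : ContDiff ℝ 3 f) (x u v w : E) :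
    fderiv ℝ (fderiv ℝ (fderiv ℝ f)) x u v w = fderiv ℝ (fderiv ℝ (fderiv ℝ f)) x v u w := by
  rw [(hf.fderiv_right (m := 2) (by norm_num)).contDiffAt.isSymmSndFDerivAt (by simp) u v]

theorem fderiv_fderiv_fderiv_swap_right (hf : ContDiff ℝ 3 f) (x u v w : E) :
    fderiv ℝ (fderiv ℝ (fderiv ℝ f)) x u v w = fderiv ℝ (fderiv ℝ (fderiv ℝ f)) x u w v := by
  have hd : Differentiable ℝ (fderiv ℝ (fderiv ℝ f)) :=
    ((hf.fderiv_right (m := 2) (by norm_num)).fderiv_right (m := 1) (by norm_num)).differentiable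
      (by norm_num)
  have hpartial : ∀ p q, fderiv ℝ (fderiv ℝ (fderiv ℝ f)) x u p q =
      fderiv ℝ (fun y => fderiv ℝ (fderiv ℝ f) y p q) x u := by
    intro p q
    rw [fderiv_clm_apply ((hd x).clm_apply (differentiableAt_const p)) (differentiableAt_const q),
      fderiv_clm_apply (hd x) (differentiableAt_const p)]
    simp
  have hsymm : ∀ y, fderiv ℝ (fderiv ℝ f) y v w = fderiv ℝ (fderiv ℝ f) y w v := fun y =>
    hf.contDiffAt.isSymmSndFDerivAt (by simp; norm_num) v w
  rw [hpartial, hpartial, funext hsymm]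

theorem iteratedFDeriv_comp_clm_apply_const {G : Type*} [NormedAddCommGroup G] [NormedSpace ℝ G]
    (L : G →L[ℝ] E) {n : WithTop ℕ∞} {k : ℕ} (hf : ContDiff ℝ n f) (hk : k ≤ n) {x v : G} {w : E}
    {c : ℝ} (hv : L v = c • w) :
    iteratedFDeriv ℝ k (fun y => f (L y)) x (fun _ => v) =
      c ^ k • iteratedFDeriv ℝ k f (L x) (fun _ => w) := by
  rw [show (fun y => f (L y)) = f ∘ L from rfl, L.iteratedFDeriv_comp_right hf x hk,
    ContinuousMultilinearMap.compContinuousLinearMap_apply]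
  simp only [hv, ContinuousMultilinearMap.map_smul_univ, Finset.prod_const, Finset.card_univ,
    Fintype.card_fin]

theorem differentiable_iteratedFDeriv_apply {n k : ℕ} (hf : ContDiff ℝ n f) (hk : k < n)
    (m : Fin k → E) : Differentiable ℝ fun x => iteratedFDeriv ℝ k f x m :=
  (hf.differentiable_iteratedFDeriv (by exact_mod_cast hk)).continuousMultilinear_apply_const m

end Multilinear

local notation "ℝ²" => Fin 2 → ℝ

section Coordinates

variable {h : ℝ² → ℝ}

theorem eq_coord_smul_add (v : ℝ²) : v = v 0 • Pi.single 0 1 + v 1 • Pi.single 1 1 := by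
  ext i; fin_cases i <;> simp

theorem fderiv_apply_eq_pd1 (z v : ℝ²) : fderiv ℝ h z v = v 0 * pd1 h 0 z + v 1 * pd1 h 1 z := by
  conv_lhs => rw [eq_coord_smul_add v]
  simp [pd1]

theorem wrot_eq (x : ℝ²) : wrot h x = pd1 h 1 x • Pi.single 0 1 + (-pd1 h 0 x) • Pi.single 1 1 :=
  eq_coord_smul_add _

theorem K2_eq_iteratedFDeriv (hh : ContDiff ℝ 2 h) (x : ℝ²) :
    K2 h x = 1 / 2 * iteratedFDeriv ℝ 2 h x (fun _ => wrot h x) := by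
  have hsymm := hh.contDiffAt.isSymmSndFDerivAt (x := x) (by simp) (Pi.single 1 1) (Pi.single 0 1)
  simp only [K2, pd2, iteratedFDeriv_two_apply, Matrix.cons_val_zero, Matrix.cons_val_one,
    wrot_eq, map_add, map_smul, add_apply, smul_apply, smul_eq_mul, hsymm]
  ring

theorem K3_eq_iteratedFDeriv (hh : ContDiff ℝ 3 h) (x : ℝ²) :
    K3 h x = 1 / 6 * iteratedFDeriv ℝ 3 h x (fun _ => wrot h x) := by
  have swapL := fderiv_fderiv_fderiv_swap_left hh x
  have swapR := fderiv_fderiv_fderiv_swap_right hh x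
  simp only [K3, pd3, iteratedFDeriv_three_apply, Matrix.cons_val_zero, Matrix.cons_val_one,
    Matrix.cons_val_two, Matrix.tail_cons, Matrix.head_cons, wrot_eq, map_add, map_smul,
    add_apply, smul_apply, smul_eq_mul,
    swapR (Pi.single 0 1) (Pi.single 1 1) (Pi.single 0 1),
    swapL (Pi.single 1 1) (Pi.single 0 1),
    swapR (Pi.single 1 1) (Pi.single 1 1) (Pi.single 0 1)]
  ring

end Coordinates

section LinearChange

variable {h : ℝ² → ℝ} (L : ℝ² →L[ℝ] ℝ²) {x : ℝ²}

theorem pd1_comp (hh : DifferentiableAt ℝ h (L x)) (i : Fin 2) :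
    pd1 (fun y => h (L y)) i x = fderiv ℝ h (L x) (L (Pi.single i 1)) := by
  rw [pd1, show (fun y => h (L y)) = h ∘ L from rfl, fderiv_comp x hh L.differentiableAt, L.fderiv]
  rfl

-- `w_g = J ∇g` with `J` a quarter turn, and `L J Lᵀ = det L • J`.
theorem wrot_comp (hh : DifferentiableAt ℝ h (L x)) :
    L (wrot (fun y => h (L y)) x) = LinearMap.det (L : ℝ² →ₗ[ℝ] ℝ²) • wrot h (L x) := by
  rw [← LinearMap.det_toMatrix', Matrix.det_fin_two, wrot_eq, wrot, pd1_comp L hh, pd1_comp L hh,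
    fderiv_apply_eq_pd1, fderiv_apply_eq_pd1]
  ext i; fin_cases i <;> simp [LinearMap.toMatrix'_apply] <;> ring

theorem K2_comp (hh : ContDiff ℝ 2 h) :
    K2 (fun y => h (L y)) x = LinearMap.det (L : ℝ² →ₗ[ℝ] ℝ²) ^ 2 * K2 h (L x) := by
  rw [K2_eq_iteratedFDeriv (h := fun y => h (L y)) (hh.comp L.contDiff), K2_eq_iteratedFDeriv hh,
    iteratedFDeriv_comp_clm_apply_const L hh le_rfl (wrot_comp L (hh.differentiable (by simp) _)),
    smul_eq_mul]
  ring

theorem K3_comp (hh : ContDiff ℝ 3 h) :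
    K3 (fun y => h (L y)) x = LinearMap.det (L : ℝ² →ₗ[ℝ] ℝ²) ^ 3 * K3 h (L x) := by
  rw [K3_eq_iteratedFDeriv (h := fun y => h (L y)) (hh.comp L.contDiff), K3_eq_iteratedFDeriv hh,
    iteratedFDeriv_comp_clm_apply_const L hh le_rfl (wrot_comp L (hh.differentiable (by simp) _)),
    smul_eq_mul]
  ring

theorem J3_comp (hh : ContDiff ℝ 3 h) (hL : LinearMap.det (L : ℝ² →ₗ[ℝ] ℝ²) ≠ 0) :
    J3 (fun y => h (L y)) = fun x => J3 h (L x) := by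
  ext x
  rw [J3, J3, K2_comp L (hh.of_le (by norm_num)), K3_comp L hh, mul_pow, mul_pow, ← pow_mul,
    ← pow_mul]
  exact mul_div_mul_left _ _ (pow_ne_zero _ hL)

theorem lamhat_comp (hh : ContDiff ℝ 3 h) (hL : LinearMap.det (L : ℝ² →ₗ[ℝ] ℝ²) ≠ 0) :
    L (lamhat (fun y => h (L y)) x) = lamhat h (L x) := by
  rw [lamhat, lamhat, map_smul, wrot_comp L (hh.differentiable (by simp) _), smul_smul,
    K2_comp L (hh.of_le (by norm_num)), K3_comp L hh]
  congr 1
  set d := LinearMap.det (L : ℝ² →ₗ[ℝ] ℝ²)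
  calc 3 * (d ^ 3 * K3 h (L x)) / (2 * (d ^ 2 * K2 h (L x)) ^ 2) * d
      = d ^ 4 * (3 * K3 h (L x)) / (d ^ 4 * (2 * K2 h (L x) ^ 2)) := by ring
    _ = 3 * K3 h (L x) / (2 * K2 h (L x) ^ 2) := mul_div_mul_left _ _ (pow_ne_zero _ hL)

end LinearChange

section Smoothness

variable {h : ℝ² → ℝ}

theorem differentiable_pd1 (hh : ContDiff ℝ 2 h) (i : Fin 2) : Differentiable ℝ (pd1 h i) :=
  ((hh.fderiv_right (m := 1) (by norm_num)).differentiable (by norm_num)).clm_apply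
    (differentiable_const _)

theorem differentiableAt_J3 (hh : ContDiff ℝ 4 h) {z : ℝ²} (hz : K2 h z ≠ 0) :
    DifferentiableAt ℝ (J3 h) z := by
  have hpd1 := differentiable_pd1 (hh.of_le (by norm_num))
  have hpd2 := differentiable_iteratedFDeriv_apply hh (k := 2) (by norm_num)
  have hpd3 := differentiable_iteratedFDeriv_apply hh (k := 3) (by norm_num)
  unfold J3 K2 K3 pd2 pd3
  fun_prop (disch := exact pow_ne_zero 3 hz)

end Smoothness

/-- Applying the invariant derivation `λ̂` to the invariant `J₃` produces a new
`GL(2)`-invariant `J₄ = λ̂(J₃)` of order 4 of binary forms: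
`J₄(h∘A)(x) = J₄(h)(Ax)`. -/
theorem J4_invariance (h : (Fin 2 → ℝ) → ℝ) (hh : ContDiff ℝ 4 h)
    (A : (Fin 2 → ℝ) →ₗ[ℝ] (Fin 2 → ℝ)) (hA : LinearMap.det A ≠ 0)
    (x : Fin 2 → ℝ) (hx : ∀ᶠ y in nhds (A x), K2 h y ≠ 0) :
    J4 (fun y => h (A y)) x = J4 h (A x) := by
  let L := LinearMap.toContinuousLinearMap A
  have hh3 : ContDiff ℝ 3 h := hh.of_le (by norm_num)
  have hJ3 : HasFDerivAt (fun y => J3 h (L y)) ((fderiv ℝ (J3 h) (L x)).comp L) x :=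
    (differentiableAt_J3 hh hx.self_of_nhds).hasFDerivAt.comp x L.hasFDerivAt
  change fderiv ℝ (J3 fun y => h (L y)) x (lamhat (fun y => h (L y)) x) = J4 h (L x)
  rw [J3_comp L hh3 hA, hJ3.fderiv, ContinuousLinearMap.comp_apply, lamhat_comp L hh3 hA]
  rfl
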